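/- arXiv:2602.22512 — 4 statements merged into one kernel-verified Lean document; each statement's English description precedes it below -/
import Mathlib

section
/- Let $a,b,c,d\in\mathbb{R}$ with $1\le a\le b$, and let $0<\eta,\xi<1$. Then the number of integer pairs $(p,q)$ with $\lfloor c\rfloor\le p\le\lceil a+c\rceil$, $\lfloor d\rfloor\le q\le\lceil b+d\rceil$, and $|\frac{p-c}{a}-\frac{q-d}{b}|<\frac{\eta}{a}+\frac{\xi}{b}$ is at most $C(b\eta+a)L$ for an absolute constant $C$, where $L=\max\{1,\frac{\log b}{a}\}$. -/
open scoped Classical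

/-- `log` with the convention that `log x = 1` for `x ≤ e`. -/
noncomputable def clog (x : ℝ) : ℝ := max 1 (Real.log x)

theorem stmt0 :
    ∃ C : ℝ, 0 < C ∧ ∀ (a b c d η ξ : ℝ), 1 ≤ a → a ≤ b →
      0 < η → η < 1 → 0 < ξ → ξ < 1 →
      ((((Finset.Icc ⌊c⌋ ⌈a + c⌉) ×ˢ (Finset.Icc ⌊d⌋ ⌈b + d⌉)).filter
        (fun pq => |((pq.1 : ℝ) - c) / a - ((pq.2 : ℝ) - d) / b| < η / a + ξ / b)).card : ℝ)
        ≤ C * (b * η + a) * max 1 (clog b / a) := by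
  refine ⟨12, by norm_num, ?_⟩
  intro a b c d η ξ ha hab hη hη1 hξ hξ1
  have ha0 : (0:ℝ) < a := lt_of_lt_of_le one_pos ha
  have hb0 : (0:ℝ) < b := lt_of_lt_of_le one_pos (ha.trans hab)
  set A := Finset.Icc ⌊c⌋ ⌈a + c⌉ with hA
  set B := Finset.Icc ⌊d⌋ ⌈b + d⌉ with hB
  set P : ℤ × ℤ → Prop := fun pq =>
    |((pq.1 : ℝ) - c) / a - ((pq.2 : ℝ) - d) / b| < η / a + ξ / b with hP
  set r : ℝ := b * η / a + ξ with hr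
  have hr0 : 0 < r := by positivity
  -- fiber bound
  have fiber : ∀ p : ℤ, ((B.filter fun q => P (p, q)).card : ℝ) ≤ 2 * r + 1 := by
    intro p
    set m : ℝ := d + b * ((p : ℝ) - c) / a with hm
    have hsub : (B.filter fun q => P (p, q)) ⊆ Finset.Icc ⌈m - r⌉ ⌊m + r⌋ := by
      intro q hq
      have hq' := (Finset.mem_filter.mp hq).2
      simp only [hP] at hq'
      have habs := abs_lt.mp hq'
      have e1 : b * (((q:ℝ) - d) / b) = (q:ℝ) - d := mul_div_cancel₀ _ hb0.ne'
      have e2 : b * (ξ / b) = ξ := mul_div_cancel₀ _ hb0.ne'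
      have h1 : (q:ℝ) < m + r := by
        have := mul_lt_mul_of_pos_left habs.1 hb0
        rw [mul_neg, mul_add, mul_sub, e1, e2, ← mul_div_assoc, ← mul_div_assoc] at this
        rw [hm, hr]
        linarith
      have h2 : m - r < (q:ℝ) := by
        have := mul_lt_mul_of_pos_left habs.2 hb0
        rw [mul_add, mul_sub, e1, e2, ← mul_div_assoc, ← mul_div_assoc] at this
        rw [hm, hr]
        linarith
      exact Finset.mem_Icc.mpr ⟨Int.ceil_le.mpr h2.le, Int.le_floor.mpr h1.le⟩
    calc ((B.filter fun q => P (p, q)).card : ℝ)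
        ≤ ((Finset.Icc ⌈m - r⌉ ⌊m + r⌋).card : ℝ) := by
          exact_mod_cast Finset.card_le_card hsub
      _ ≤ 2 * r + 1 := by
          rw [Int.card_Icc]
          rcases le_or_gt (⌊m + r⌋ + 1 - ⌈m - r⌉) 0 with h | h
          · rw [Int.toNat_of_nonpos h, Nat.cast_zero]; positivity
          · have hz : (((⌊m + r⌋ + 1 - ⌈m - r⌉).toNat : ℕ) : ℝ)
                = ((⌊m + r⌋ : ℝ) + 1 - (⌈m - r⌉ : ℝ)) := by
              exact_mod_cast Int.toNat_of_nonneg h.le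
            rw [hz]
            have h3 := Int.floor_le (m + r)
            have h4 := Int.le_ceil (m - r)
            linarith
  -- number of p values
  have pcount : ((A.card : ℝ)) ≤ a + 3 := by
    rw [hA, Int.card_Icc]
    rcases le_or_gt (⌈a + c⌉ + 1 - ⌊c⌋) 0 with h | h
    · rw [Int.toNat_of_nonpos h, Nat.cast_zero]; linarith
    · have hz : (((⌈a + c⌉ + 1 - ⌊c⌋).toNat : ℕ) : ℝ)
          = ((⌈a + c⌉ : ℝ) + 1 - (⌊c⌋ : ℝ)) := by
        exact_mod_cast Int.toNat_of_nonneg h.le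
      rw [hz]
      have h3 := Int.ceil_lt_add_one (a + c)
      have h4 := Int.sub_one_lt_floor c
      have h3' : (⌈a + c⌉ : ℝ) < a + c + 1 := by exact_mod_cast h3
      have h4' : c - 1 < (⌊c⌋ : ℝ) := by exact_mod_cast h4
      linarith
  -- split the filtered product over fibers
  have hsub2 : (A ×ˢ B).filter P ⊆
      A.biUnion fun p => (B.filter fun q => P (p, q)).image (Prod.mk p) := by
    intro x hx
    rw [Finset.mem_filter, Finset.mem_product] at hx
    rw [Finset.mem_biUnion]
    exact ⟨x.1, hx.1.1, Finset.mem_image.mpr ⟨x.2, Finset.mem_filter.mpr ⟨hx.1.2, hx.2⟩, rfl⟩⟩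
  have hcard : (((A ×ˢ B).filter P).card : ℝ) ≤ ∑ p ∈ A, ((B.filter fun q => P (p, q)).card : ℝ) := by
    have := (Finset.card_le_card hsub2).trans (Finset.card_biUnion_le)
    have h2 : ∀ p ∈ A, ((B.filter fun q => P (p, q)).image (Prod.mk p)).card
        ≤ (B.filter fun q => P (p, q)).card := fun p _ => Finset.card_image_le
    calc (((A ×ˢ B).filter P).card : ℝ)
        ≤ ((∑ p ∈ A, ((B.filter fun q => P (p, q)).image (Prod.mk p)).card : ℕ) : ℝ) := by
          exact_mod_cast this
      _ ≤ _ := by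
          push_cast
          exact Finset.sum_le_sum fun p hp => by exact_mod_cast h2 p hp
  have main : (((A ×ˢ B).filter P).card : ℝ) ≤ 12 * (b * η + a) := by
    calc (((A ×ˢ B).filter P).card : ℝ)
        ≤ ∑ p ∈ A, ((B.filter fun q => P (p, q)).card : ℝ) := hcard
      _ ≤ ∑ _p ∈ A, (2 * r + 1) := Finset.sum_le_sum fun p _ => fiber p
      _ = (A.card : ℝ) * (2 * r + 1) := by rw [Finset.sum_const, nsmul_eq_mul]
      _ ≤ (a + 3) * (2 * r + 1) := by
          apply mul_le_mul_of_nonneg_right pcount (by positivity)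
      _ ≤ 12 * (b * η + a) := by
          rw [hr]
          have hbη : 0 < b * η := by positivity
          have h5 : b * η / a ≤ b * η := by
            rw [div_le_iff₀ ha0]; nlinarith
          have h7 : a * (b * η / a) = b * η := by field_simp
          have h8 : a * ξ ≤ a := mul_le_of_le_one_right ha0.le hξ1.le
          nlinarith [h5, h7, h8, hξ1.le, ha, hbη, div_pos hbη ha0]
  have hmax : (1:ℝ) ≤ max 1 (clog b / a) := le_max_left _ _
  calc (((A ×ˢ B).filter P).card : ℝ) ≤ 12 * (b * η + a) := main
    _ = 12 * (b * η + a) * 1 := (mul_one _).symm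
    _ ≤ 12 * (b * η + a) * max 1 (clog b / a) := by
        apply mul_le_mul_of_nonneg_left hmax (by positivity)
end

section
/- Let $a,b,c,d\in\mathbb{R}$ with $1\le a\le b$, and $0<\eta,\xi<1$. The set $F(\eta,\xi)=\{x\in[0,1]:\|ax+c\|<\eta,\ \|bx+d\|<\xi\}$ can be covered by at most $C(b\eta L+aL)$ intervals of length $\min\{\eta/a,\xi/b\}$, where $C$ is an absolute constant and $L=\max\{1,\frac{\log b}{a}\}$. -/
open Set

/-- Distance from `x` to the nearest integer. -/
noncomputable def nint (x : ℝ) : ℝ := |x - round x|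

lemma card_Icc_le_real {p q : ℤ} {B : ℝ} (hB : 0 ≤ B) (h : (q:ℝ) + 1 - p ≤ B) :
    ((Finset.Icc p q).card : ℝ) ≤ B := by
  rw [Int.card_Icc]
  rcases le_or_gt (q + 1 - p) 0 with h0 | h0
  · simp [Int.toNat_of_nonpos h0, hB]
  · have : (((q + 1 - p).toNat : ℤ) : ℝ) ≤ B := by
      rw [Int.toNat_of_nonneg h0.le]; push_cast; linarith
    exact_mod_cast this

theorem stmt1 :
    ∃ C : ℝ, 0 < C ∧ ∀ (a b c d η ξ : ℝ), 1 ≤ a → a ≤ b →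
      0 < η → η < 1 → 0 < ξ → ξ < 1 →
      ∃ t : Finset ℝ,
        (t.card : ℝ) ≤ C * (b * η * max 1 (clog b / a) + a * max 1 (clog b / a)) ∧
        {x ∈ Icc (0:ℝ) 1 | nint (a * x + c) < η ∧ nint (b * x + d) < ξ}
          ⊆ ⋃ y ∈ t, Icc y (y + min (η / a) (ξ / b)) := by
  refine ⟨24, by norm_num, fun a b c d η ξ ha hab hη hη1 hξ hξ1 => ?_⟩
  have ha0 : (0:ℝ) < a := by linarith
  have hb0 : (0:ℝ) < b := by linarith
  set δ : ℝ := min (η / a) (ξ / b) with hδdef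
  have hδ0 : 0 < δ := lt_min (div_pos hη ha0) (div_pos hξ hb0)
  set pt : ℤ → ℤ → ℝ := fun m n => max (((m:ℝ) - c - η)/a) (((n:ℝ) - d - ξ)/b) with hpt
  set A : ℤ → ℝ := fun m => b * (((m:ℝ) - c - η)/a) + d with hA
  set t : Finset ℝ := (Finset.Icc ⌈c - 1⌉ ⌊a + c + 1⌋).biUnion (fun m =>
    (Finset.Icc ⌈A m - 1⌉ ⌊A m + 2*b*η/a + 1⌋).biUnion (fun n =>
      {pt m n, pt m n + δ})) with ht
  have hL : (1:ℝ) ≤ max 1 (clog b / a) := le_max_left _ _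
  clear_value δ pt A t
  refine ⟨t, ?_, ?_⟩
  · -- cardinality bound
    have hinner : ∀ m : ℤ,
        ((((Finset.Icc ⌈A m - 1⌉ ⌊A m + 2*b*η/a + 1⌋).biUnion (fun n =>
          ({pt m n, pt m n + δ} : Finset ℝ))).card : ℝ) ≤ (2*b*η/a + 3) * 2) := by
      intro m
      have h1 : ((Finset.Icc ⌈A m - 1⌉ ⌊A m + 2*b*η/a + 1⌋).biUnion (fun n =>
          ({pt m n, pt m n + δ} : Finset ℝ))).card ≤
          (Finset.Icc ⌈A m - 1⌉ ⌊A m + 2*b*η/a + 1⌋).card * 2 := by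
        refine le_trans Finset.card_biUnion_le ?_
        calc ∑ n ∈ Finset.Icc ⌈A m - 1⌉ ⌊A m + 2*b*η/a + 1⌋,
              ({pt m n, pt m n + δ} : Finset ℝ).card
            ≤ ∑ _n ∈ Finset.Icc ⌈A m - 1⌉ ⌊A m + 2*b*η/a + 1⌋, 2 :=
              Finset.sum_le_sum (fun n _ =>
                (Finset.card_insert_le _ _).trans (by simp))
          _ = (Finset.Icc ⌈A m - 1⌉ ⌊A m + 2*b*η/a + 1⌋).card * 2 := by
              simp [Finset.sum_const, mul_comm]
      have h2 : ((Finset.Icc ⌈A m - 1⌉ ⌊A m + 2*b*η/a + 1⌋).card : ℝ) ≤ 2*b*η/a + 3 := by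
        apply card_Icc_le_real (by positivity)
        have hf := Int.floor_le (A m + 2*b*η/a + 1)
        have hc := Int.le_ceil (A m - 1)
        linarith
      calc (((Finset.Icc ⌈A m - 1⌉ ⌊A m + 2*b*η/a + 1⌋).biUnion (fun n =>
          ({pt m n, pt m n + δ} : Finset ℝ))).card : ℝ)
          ≤ ((Finset.Icc ⌈A m - 1⌉ ⌊A m + 2*b*η/a + 1⌋).card : ℝ) * 2 := by
            exact_mod_cast h1
        _ ≤ (2*b*η/a + 3) * 2 := by linarith
    have hMcard : ((Finset.Icc ⌈c - 1⌉ ⌊a + c + 1⌋).card : ℝ) ≤ a + 3 := by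
      apply card_Icc_le_real (by linarith)
      have hf := Int.floor_le (a + c + 1)
      have hc := Int.le_ceil (c - 1)
      linarith
    have hcard : (t.card : ℝ) ≤ (a + 3) * ((2*b*η/a + 3) * 2) := by
      calc (t.card : ℝ)
          ≤ ∑ m ∈ Finset.Icc ⌈c - 1⌉ ⌊a + c + 1⌋,
            ((((Finset.Icc ⌈A m - 1⌉ ⌊A m + 2*b*η/a + 1⌋).biUnion (fun n =>
              ({pt m n, pt m n + δ} : Finset ℝ))).card : ℝ)) := by
            rw [ht]
            exact_mod_cast Finset.card_biUnion_le
        _ ≤ (Finset.Icc ⌈c - 1⌉ ⌊a + c + 1⌋).card • ((2*b*η/a + 3) * 2) :=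
            Finset.sum_le_card_nsmul _ _ _ (fun m _ => hinner m)
        _ = ((Finset.Icc ⌈c - 1⌉ ⌊a + c + 1⌋).card : ℝ) * ((2*b*η/a + 3) * 2) :=
            nsmul_eq_mul _ _
        _ ≤ (a + 3) * ((2*b*η/a + 3) * 2) := by
            apply mul_le_mul_of_nonneg_right hMcard (by positivity)
    have hu : a * (b*η/a) = b*η := by field_simp
    have hu2 : b*η/a ≤ b*η := div_le_self (by positivity) ha
    have hu0 : 0 ≤ b*η/a := by positivity
    have hbL : b*η ≤ b*η * max 1 (clog b / a) :=
      le_mul_of_one_le_right (by positivity) hL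
    have haL : a ≤ a * max 1 (clog b / a) :=
      le_mul_of_one_le_right (by positivity) hL
    have key : (a + 3) * ((2*b*η/a + 3) * 2)
        = 4*(a*(b*η/a)) + 6*a + 12*(b*η/a) + 18 := by ring
    linarith [hcard, key, hu, hu2, hu0, hbL, haL, ha]
  · -- coverage
    intro x hx
    simp only [mem_setOf_eq, mem_Icc] at hx
    obtain ⟨⟨hx0, hx1⟩, h1, h2⟩ := hx
    unfold nint at h1 h2
    set m : ℤ := round (a*x + c) with hm
    set n : ℤ := round (b*x + d) with hn
    obtain ⟨e1l, e1r⟩ := abs_lt.mp h1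
    obtain ⟨e2l, e2r⟩ := abs_lt.mp h2
    have hax : 0 ≤ a*x := by positivity
    have hax1 : a*x ≤ a := by nlinarith
    have hmmem : m ∈ Finset.Icc ⌈c - 1⌉ ⌊a + c + 1⌋ := by
      rw [Finset.mem_Icc]
      constructor
      · exact Int.ceil_le.mpr (by linarith [e1r])
      · exact Int.le_floor.mpr (by linarith [e1l])
    -- x bounds from m
    have hxl : ((m:ℝ) - c - η)/a < x := by
      rw [div_lt_iff₀ ha0]
      nlinarith [e1l]
    have hxr : x < ((m:ℝ) - c + η)/a := by
      rw [lt_div_iff₀ ha0]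
      nlinarith [e1r]
    have hbxl : A m < b*x + d := by
      simp only [hA]
      have := mul_lt_mul_of_pos_left hxl hb0
      linarith
    have hbxr : b*x + d < A m + 2*b*η/a := by
      simp only [hA]
      have := mul_lt_mul_of_pos_left hxr hb0
      have heq : b * (((m:ℝ) - c + η)/a) = b * (((m:ℝ) - c - η)/a) + 2*b*η/a := by
        field_simp; ring
      linarith
    have hnmem : n ∈ Finset.Icc ⌈A m - 1⌉ ⌊A m + 2*b*η/a + 1⌋ := by
      rw [Finset.mem_Icc]
      constructor
      · exact Int.ceil_le.mpr (by linarith [e2r])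
      · exact Int.le_floor.mpr (by linarith [e2l])
    have hptx : pt m n ≤ x := by
      simp only [hpt]
      apply max_le hxl.le
      rw [div_le_iff₀ hb0]
      nlinarith [e2l]
    have hx2δ : x ≤ pt m n + 2*δ := by
      rcases le_total (η/a) (ξ/b) with h | h
      · have hδe : δ = η/a := by rw [hδdef]; exact min_eq_left h
        have : ((m:ℝ) - c + η)/a = ((m:ℝ) - c - η)/a + 2*(η/a) := by
          field_simp; ring
        have hle : ((m:ℝ) - c - η)/a ≤ pt m n := by simp only [hpt]; exact le_max_left _ _
        rw [hδe]; linarith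
      · have hδe : δ = ξ/b := by rw [hδdef]; exact min_eq_right h
        have hxrb : x < ((n:ℝ) - d + ξ)/b := by
          rw [lt_div_iff₀ hb0, mul_comm]; linarith [e2r]
        have : ((n:ℝ) - d + ξ)/b = ((n:ℝ) - d - ξ)/b + 2*(ξ/b) := by
          field_simp; ring
        have hle : ((n:ℝ) - d - ξ)/b ≤ pt m n := by simp only [hpt]; exact le_max_right _ _
        rw [hδe]; linarith
    have hmem1 : pt m n ∈ t := by
      rw [ht]
      simp only [Finset.mem_biUnion]
      exact ⟨m, hmmem, n, hnmem, by simp⟩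
    have hmem2 : pt m n + δ ∈ t := by
      rw [ht]
      simp only [Finset.mem_biUnion]
      exact ⟨m, hmmem, n, hnmem, by simp⟩
    simp only [mem_iUnion, exists_prop]
    rcases le_total x (pt m n + δ) with hc | hc
    · exact ⟨pt m n, hmem1, hptx, hc⟩
    · exact ⟨pt m n + δ, hmem2, hc, by linarith⟩
end

section
/- Let $a,b,c,d\in\mathbb{R}$ with $1\le a\le b$ and $0<\delta\le 1/2$. Then the Lebesgue measure of $E(\delta)=\{x\in[0,1]:\|ax+c\|\cdot\|bx+d\|<\delta^2\}$ satisfies $\lambda(E(\delta))\le C(\delta^2 L\log(1/\delta)+(a/b)^{1/2}\delta L)$ for an absolute constant $C$, where $L=\max\{1,\frac{\log b}{a}\}$. -/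
/-!
Split according to the dyadic size of `‖ax + c‖`. Points with `‖ax + c‖ < r` have measure `O(r)`.
If `r 2^j ≤ ‖ax + c‖ < r 2^(j+1)`, then `‖bx + d‖ < δ² / (r 2^j)`. The set where `‖ax + c‖ < ε₁`
consists of `O(a)` intervals of length `2ε₁/a`, and each of them meets the set where
`‖bx + d‖ < ε₂` in measure `O((ε₁ b / a + 1) ε₂ / b)`; so the joint condition has measure
`O(ε₁ ε₂ + a ε₂ / b)`. Summing over the `O(log (1/δ))` relevant scales gives
`O(r + δ² log (1/δ) + a δ² / (b r))`, and `r = δ (δ + √(a/b))` balances the terms.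
-/

open Set MeasureTheory

lemma nint_nonneg (x : ℝ) : 0 ≤ nint x := abs_nonneg _

lemma nint_le_half (x : ℝ) : nint x ≤ 1 / 2 := abs_sub_round x

lemma card_Icc_ceil_floor_le {α β : ℝ} (h : α ≤ β + 1) :
    ((Finset.Icc ⌈α⌉ ⌊β⌋).card : ℝ) ≤ β - α + 1 := by
  have hcard : ((Finset.Icc ⌈α⌉ ⌊β⌋).card : ℤ) = max (⌊β⌋ + 1 - ⌈α⌉) 0 := by
    rw [Int.card_Icc, Int.toNat_eq_max]
  have hcard' : ((Finset.Icc ⌈α⌉ ⌊β⌋).card : ℝ) = max ((⌊β⌋ + 1 - ⌈α⌉ : ℤ) : ℝ) 0 := by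
    exact_mod_cast hcard
  rw [hcard']
  push_cast
  exact max_le (by linarith [Int.floor_le β, Int.le_ceil α]) (by linarith)

lemma setOf_nint_lt_subset_biUnion {a c ε u v : ℝ} (ha : 0 < a) :
    {x ∈ Icc u v | nint (a * x + c) < ε} ⊆
      ⋃ n ∈ Finset.Icc ⌈a * u + c - ε⌉ ⌊a * v + c + ε⌋,
        Ioo ((n - c - ε) / a) ((n - c + ε) / a) := by
  rintro x ⟨⟨hux, hxv⟩, hx⟩
  obtain ⟨hlo, hhi⟩ := abs_lt.mp hx
  have hau : a * u ≤ a * x := mul_le_mul_of_nonneg_left hux ha.le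
  have hav : a * x ≤ a * v := mul_le_mul_of_nonneg_left hxv ha.le
  refine mem_biUnion (x := round (a * x + c)) ?_ ⟨?_, ?_⟩
  · exact Finset.mem_Icc.mpr ⟨Int.ceil_le.mpr (by linarith), Int.le_floor.mpr (by linarith)⟩
  · rw [div_lt_iff₀ ha]; linarith
  · rw [lt_div_iff₀ ha]; linarith

lemma volume_setOf_nint_lt_le {a c ε u v : ℝ} (ha : 0 < a) (hε : 0 ≤ ε) (huv : u ≤ v) :
    volume {x ∈ Icc u v | nint (a * x + c) < ε}
      ≤ ENNReal.ofReal ((a * (v - u) + 2 * ε + 1) * (2 * ε / a)) := by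
  set F := Finset.Icc ⌈a * u + c - ε⌉ ⌊a * v + c + ε⌋
  have hF : (F.card : ℝ) ≤ a * (v - u) + 2 * ε + 1 := by
    refine (card_Icc_ceil_floor_le ?_).trans_eq (by ring)
    nlinarith
  calc volume {x ∈ Icc u v | nint (a * x + c) < ε}
      ≤ ∑ n ∈ F, volume (Ioo ((n - c - ε) / a) ((n - c + ε) / a)) :=
        (measure_mono (setOf_nint_lt_subset_biUnion ha)).trans (measure_biUnion_finset_le _ _)
    _ ≤ F.card • ENNReal.ofReal (2 * ε / a) := by
        refine Finset.sum_le_card_nsmul _ _ _ fun n _ => ?_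
        rw [Real.volume_Ioo]
        exact le_of_eq (congrArg _ (by ring))
    _ ≤ ENNReal.ofReal ((a * (v - u) + 2 * ε + 1) * (2 * ε / a)) := by
        rw [← ENNReal.ofReal_nsmul, nsmul_eq_mul]
        exact ENNReal.ofReal_le_ofReal (mul_le_mul_of_nonneg_right hF (by positivity))

lemma volume_setOf_nint_lt_le_Icc_zero_one {a c ε : ℝ} (ha : 1 ≤ a) (hε : 0 ≤ ε) (hε' : ε ≤ 1) :
    volume {x ∈ Icc (0:ℝ) 1 | nint (a * x + c) < ε} ≤ ENNReal.ofReal (8 * ε) := by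
  refine (volume_setOf_nint_lt_le (by linarith) hε zero_le_one).trans (ENNReal.ofReal_le_ofReal ?_)
  rw [mul_div_assoc', div_le_iff₀ (by linarith)]
  nlinarith

lemma volume_setOf_nint_lt_and_nint_lt_le {a b c d ε₁ ε₂ : ℝ} (ha : 1 ≤ a) (hb : 0 < b)
    (hε₁ : 0 ≤ ε₁) (hε₁' : ε₁ ≤ 1) (hε₂ : 0 ≤ ε₂) (hε₂' : ε₂ ≤ 1) :
    volume {x ∈ Icc (0:ℝ) 1 | nint (a * x + c) < ε₁ ∧ nint (b * x + d) < ε₂}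
      ≤ ENNReal.ofReal (16 * ε₁ * ε₂ + 24 * a * ε₂ / b) := by
  have ha0 : 0 < a := by linarith
  set F := Finset.Icc ⌈a * 0 + c - ε₁⌉ ⌊a * 1 + c + ε₁⌋
  have hF : (F.card : ℝ) ≤ 4 * a := by
    refine (card_Icc_ceil_floor_le (by linarith)).trans ?_
    linarith
  have hsub : {x ∈ Icc (0:ℝ) 1 | nint (a * x + c) < ε₁ ∧ nint (b * x + d) < ε₂} ⊆
      ⋃ n ∈ F, {x ∈ Icc ((n - c - ε₁) / a) ((n - c + ε₁) / a) | nint (b * x + d) < ε₂} := by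
    rintro x ⟨hx, hx₁, hx₂⟩
    obtain ⟨n, hn, hxn⟩ := mem_iUnion₂.mp (setOf_nint_lt_subset_biUnion ha0 ⟨hx, hx₁⟩)
    exact mem_biUnion hn ⟨Ioo_subset_Icc_self hxn, hx₂⟩
  calc volume {x ∈ Icc (0:ℝ) 1 | nint (a * x + c) < ε₁ ∧ nint (b * x + d) < ε₂}
      ≤ ∑ n ∈ F, volume {x ∈ Icc ((n - c - ε₁) / a) ((n - c + ε₁) / a) | nint (b * x + d) < ε₂} :=
        (measure_mono hsub).trans (measure_biUnion_finset_le _ _)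
    _ ≤ F.card • ENNReal.ofReal ((b * (2 * ε₁ / a) + 2 * ε₂ + 1) * (2 * ε₂ / b)) := by
        refine Finset.sum_le_card_nsmul _ _ _ fun n _ => ?_
        have hlen : ((n:ℝ) - c + ε₁) / a - (n - c - ε₁) / a = 2 * ε₁ / a := by ring
        rw [← hlen]
        exact volume_setOf_nint_lt_le hb hε₂ (by gcongr; linarith)
    _ ≤ ENNReal.ofReal (16 * ε₁ * ε₂ + 24 * a * ε₂ / b) := by
        rw [← ENNReal.ofReal_nsmul, nsmul_eq_mul]
        refine ENNReal.ofReal_le_ofReal ?_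
        calc (F.card : ℝ) * ((b * (2 * ε₁ / a) + 2 * ε₂ + 1) * (2 * ε₂ / b))
            ≤ 4 * a * ((b * (2 * ε₁ / a) + 2 * ε₂ + 1) * (2 * ε₂ / b)) := by gcongr
          _ = 16 * ε₁ * ε₂ + 8 * a * ε₂ * (2 * ε₂ + 1) / b := by field_simp; ring
          _ ≤ 16 * ε₁ * ε₂ + 24 * a * ε₂ / b := by
              gcongr 16 * ε₁ * ε₂ + ?_ / b
              nlinarith [mul_nonneg ha0.le hε₂]

lemma setOf_nint_mul_nint_lt_subset {a b c d η r : ℝ} {J : ℕ} (hr : 0 < r)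
    (hJ : 1 < 2 * r * 2 ^ J) :
    {x ∈ Icc (0:ℝ) 1 | nint (a * x + c) * nint (b * x + d) < η} ⊆
      {x ∈ Icc (0:ℝ) 1 | nint (a * x + c) < r} ∪
        ⋃ j ∈ Finset.range J, {x ∈ Icc (0:ℝ) 1 | nint (a * x + c) < min (r * 2 ^ (j + 1)) 1 ∧
          nint (b * x + d) < min (η / (r * 2 ^ j)) 1} := by
  rintro x ⟨hx, hpq⟩
  set p := nint (a * x + c)
  set q := nint (b * x + d)
  rcases lt_or_ge p r with hpr | hrp
  · exact Or.inl ⟨hx, hpr⟩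
  obtain ⟨j, hjp, hpj⟩ := exists_nat_pow_near ((one_le_div hr).mpr hrp) one_lt_two
  rw [le_div_iff₀ hr] at hjp
  rw [div_lt_iff₀ hr] at hpj
  have hp : p ≤ 1 / 2 := nint_le_half _
  have hq : q ≤ 1 / 2 := nint_le_half _
  have hjJ : j < J := by
    have h : (2:ℝ) ^ j * r < 2 ^ J * r := by linarith
    exact (pow_lt_pow_iff_right₀ (one_lt_two : (1:ℝ) < 2)).mp (lt_of_mul_lt_mul_right h hr.le)
  have hqj : q < η / (r * 2 ^ j) := by
    rw [lt_div_iff₀ (by positivity)]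
    nlinarith [nint_nonneg (b * x + d)]
  refine Or.inr (mem_biUnion (Finset.mem_range.mpr hjJ) ⟨hx, ?_, ?_⟩)
  · exact lt_min (by linarith) (by linarith)
  · exact lt_min hqj (by linarith)

lemma volume_dyadic_piece_le {a b c d η r : ℝ} (ha : 1 ≤ a) (hb : 0 < b) (hη : 0 ≤ η)
    (hr : 0 < r) (j : ℕ) :
    volume {x ∈ Icc (0:ℝ) 1 |
        nint (a * x + c) < min (r * 2 ^ (j + 1)) 1 ∧ nint (b * x + d) < min (η / (r * 2 ^ j)) 1}
      ≤ ENNReal.ofReal (32 * η + 24 * a * η / (b * r) * (1 / 2) ^ j) := by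
  refine (volume_setOf_nint_lt_and_nint_lt_le ha hb (by positivity) (min_le_right _ _)
    (by positivity) (min_le_right _ _)).trans (ENNReal.ofReal_le_ofReal ?_)
  have h₁ := min_le_left (r * 2 ^ (j + 1)) 1
  have h₂ := min_le_left (η / (r * 2 ^ j)) 1
  have hprod : r * 2 ^ (j + 1) * (η / (r * 2 ^ j)) = 2 * η := by field_simp; ring
  have hgeom : 24 * a * (η / (r * 2 ^ j)) / b = 24 * a * η / (b * r) * (1 / 2) ^ j := by
    rw [one_div_pow]
    field_simp
  gcongr ?_ + ?_
  · calc 16 * min (r * 2 ^ (j + 1)) 1 * min (η / (r * 2 ^ j)) 1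
        ≤ 16 * (r * 2 ^ (j + 1)) * (η / (r * 2 ^ j)) := by gcongr
      _ = 32 * η := by rw [mul_assoc, hprod]; ring
  · rw [← hgeom]
    gcongr

theorem volume_nint_mul_nint_lt_le {a b c d η r : ℝ} {J : ℕ} (ha : 1 ≤ a) (hb : 0 < b)
    (hη : 0 ≤ η) (hr : 0 < r) (hr₁ : r ≤ 1) (hJ : 1 < 2 * r * 2 ^ J) :
    volume {x ∈ Icc (0:ℝ) 1 | nint (a * x + c) * nint (b * x + d) < η}
      ≤ ENNReal.ofReal (8 * r + 32 * J * η + 48 * a * η / (b * r)) := by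
  have hgeom : ∑ j ∈ Finset.range J, 24 * a * η / (b * r) * (1 / 2 : ℝ) ^ j
      ≤ 48 * a * η / (b * r) := by
    rw [← Finset.mul_sum]
    calc 24 * a * η / (b * r) * ∑ j ∈ Finset.range J, (1 / 2 : ℝ) ^ j
        ≤ 24 * a * η / (b * r) * 2 :=
          mul_le_mul_of_nonneg_left (sum_geometric_two_le J) (by positivity)
      _ = 48 * a * η / (b * r) := by ring
  calc volume {x ∈ Icc (0:ℝ) 1 | nint (a * x + c) * nint (b * x + d) < η}
      ≤ volume {x ∈ Icc (0:ℝ) 1 | nint (a * x + c) < r} + ∑ j ∈ Finset.range J,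
          volume {x ∈ Icc (0:ℝ) 1 | nint (a * x + c) < min (r * 2 ^ (j + 1)) 1 ∧
            nint (b * x + d) < min (η / (r * 2 ^ j)) 1} :=
        (measure_mono (setOf_nint_mul_nint_lt_subset hr hJ)).trans
          ((measure_union_le _ _).trans (add_le_add le_rfl (measure_biUnion_finset_le _ _)))
    _ ≤ ENNReal.ofReal (8 * r) + ∑ j ∈ Finset.range J,
          ENNReal.ofReal (32 * η + 24 * a * η / (b * r) * (1 / 2) ^ j) :=
        add_le_add (volume_setOf_nint_lt_le_Icc_zero_one ha hr.le hr₁)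
          (Finset.sum_le_sum fun j _ => volume_dyadic_piece_le ha hb hη hr j)
    _ = ENNReal.ofReal (8 * r + ∑ j ∈ Finset.range J,
          (32 * η + 24 * a * η / (b * r) * (1 / 2) ^ j)) := by
        rw [ENNReal.ofReal_add (by positivity) (Finset.sum_nonneg fun j _ => by positivity),
          ENNReal.ofReal_sum_of_nonneg fun j _ => by positivity]
    _ ≤ ENNReal.ofReal (8 * r + 32 * J * η + 48 * a * η / (b * r)) := by
        refine ENNReal.ofReal_le_ofReal ?_
        rw [Finset.sum_add_distrib, Finset.sum_const, Finset.card_range, nsmul_eq_mul]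
        linarith

lemma sq_le_two_pow_ceil_three_mul_log {x : ℝ} (hx : 1 ≤ x) :
    x ^ 2 ≤ 2 ^ ⌈3 * Real.log x⌉₊ := by
  rw [← Real.log_le_log_iff (by positivity) (by positivity), Real.log_pow, Real.log_pow]
  have hceil := Nat.le_ceil (3 * Real.log x)
  have hlog := Real.log_nonneg hx
  have hlog2 := Real.log_two_gt_d9
  push_cast
  nlinarith

lemma exists_nat_one_le_sq_mul_two_pow {δ : ℝ} (hδ : 0 < δ) (hδ₁ : δ ≤ 1) :
    ∃ J : ℕ, 1 ≤ δ ^ 2 * 2 ^ J ∧ (J : ℝ) ≤ 4 * clog (1 / δ) := by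
  have hx : 1 ≤ 1 / δ := by rw [le_div_iff₀ hδ]; linarith
  refine ⟨⌈3 * Real.log (1 / δ)⌉₊, ?_, ?_⟩
  · have hJ := sq_le_two_pow_ceil_three_mul_log hx
    rwa [div_pow, one_pow, div_le_iff₀ (by positivity), mul_comm] at hJ
  · have hceil : (⌈3 * Real.log (1 / δ)⌉₊ : ℝ) < 3 * Real.log (1 / δ) + 1 :=
      Nat.ceil_lt_add_one (by have := Real.log_nonneg hx; positivity)
    have hclog₁ : 1 ≤ clog (1 / δ) := le_max_left _ _
    have hclog : Real.log (1 / δ) ≤ clog (1 / δ) := le_max_right _ _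
    linarith

theorem volume_nint_mul_nint_lt_sq_le {a b c d δ : ℝ} (ha : 1 ≤ a) (hab : a ≤ b) (hδ : 0 < δ)
    (hδ₂ : δ ≤ 1 / 2) :
    volume {x ∈ Icc (0:ℝ) 1 | nint (a * x + c) * nint (b * x + d) < δ ^ 2}
      ≤ ENNReal.ofReal (136 * (δ ^ 2 * clog (1 / δ) + √(a / b) * δ)) := by
  have hb : 0 < b := by linarith
  obtain ⟨J, hJ, hJlog⟩ := exists_nat_one_le_sq_mul_two_pow hδ (by linarith)
  set s := √(a / b)
  have hs : 0 ≤ s := Real.sqrt_nonneg _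
  have hs₁ : s ≤ 1 := Real.sqrt_le_one.mpr ((div_le_one hb).mpr hab)
  have has : a = s ^ 2 * b := by rw [Real.sq_sqrt (by positivity)]; field_simp
  have hJr : 1 < 2 * (δ * (δ + s)) * 2 ^ J := by
    nlinarith [mul_nonneg (mul_nonneg hδ.le hs) (pow_nonneg zero_le_two J)]
  have hdecay : 48 * a * δ ^ 2 / (b * (δ * (δ + s))) ≤ 48 * (s * δ) := by
    rw [div_le_iff₀ (by positivity), has]
    nlinarith [mul_nonneg (mul_nonneg hs hb.le) (pow_nonneg hδ.le 3)]
  refine (volume_nint_mul_nint_lt_le ha hb (by positivity) (by positivity) (by nlinarith) hJr).trans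
    (ENNReal.ofReal_le_ofReal ?_)
  have hclog₁ : 1 ≤ clog (1 / δ) := le_max_left _ _
  nlinarith [mul_le_mul_of_nonneg_left hJlog (sq_nonneg δ)]

theorem stmt4 :
    ∃ C : ℝ, 0 < C ∧ ∀ (a b c d δ : ℝ), 1 ≤ a → a ≤ b → 0 < δ → δ ≤ 1 / 2 →
      volume {x ∈ Icc (0:ℝ) 1 | nint (a * x + c) * nint (b * x + d) < δ ^ 2}
        ≤ ENNReal.ofReal (C * (δ ^ 2 * max 1 (clog b / a) * clog (1 / δ)
            + (a / b) ^ ((1:ℝ) / 2) * δ * max 1 (clog b / a))) := by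
  refine ⟨136, by norm_num, fun a b c d δ ha hab hδ hδ₂ => ?_⟩
  refine (volume_nint_mul_nint_lt_sq_le ha hab hδ hδ₂).trans (ENNReal.ofReal_le_ofReal ?_)
  rw [← Real.sqrt_eq_rpow]
  have hL : 1 ≤ max 1 (clog b / a) := le_max_left _ _
  have hclog : 0 ≤ clog (1 / δ) := zero_le_one.trans (le_max_left _ _)
  have hs : 0 ≤ √(a / b) := Real.sqrt_nonneg _
  nlinarith [mul_nonneg (mul_nonneg (sq_nonneg δ) hclog) (sub_nonneg.mpr hL),
    mul_nonneg (mul_nonneg hs hδ.le) (sub_nonneg.mpr hL)]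
end

section
/- Let $\{a_n\},\{b_n\},\{c_n\},\{d_n\}$ be real sequences with $1\le a_n\le b_n$ for all $n$ and $\psi:\mathbb{N}\to[0,\infty)$. If $\sum_{n\in\mathbb{N}}\psi(n)\log\frac{1}{\psi(n)}<\infty$, then the two-dimensional Lebesgue measure of $M_2(\psi)=\{(x,y)\in[0,1]^2:\|a_nx+c_n\|\cdot\|b_ny+d_n\|<\psi(n)\text{ for infinitely many }n\}$ is zero. -/
/-!
By Borel–Cantelli it suffices to show that, for `1 ≤ α, β`, the set of `(x, y) ∈ [0,1]²` with
`‖αx + γ‖ ‖βy + δ‖ < p` has measure `O(p log (1/p))`. For `α ≥ 1` the set of `x ∈ [0,1]` with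
`‖αx + γ‖ ≤ η` is covered by about `α` intervals of length `2η/α`, so it has measure `≤ 6η`.
Sorting points by the dyadic size `2⁻ʲ⁻¹ < ‖αx + γ‖ ≤ 2⁻ʲ` for `j ≤ J = ⌈log₂ (1/p)⌉` puts them
in boxes `{‖αx + γ‖ ≤ 2⁻ʲ} × {‖βy + δ‖ ≤ p 2ʲ⁺¹}` of measure `O(p)` each, and the remaining
points, with `‖αx + γ‖ ≤ 2⁻ᴶ⁻¹ ≤ p`, form a set of measure `O(p)`.
-/

open Set MeasureTheory

lemma one_le_clog (x : ℝ) : 1 ≤ clog x := le_max_left _ _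

lemma log_le_clog (x : ℝ) : Real.log x ≤ clog x := le_max_right _ _

def nintSublevel (α γ δ : ℝ) : Set ℝ := {x | x ∈ Icc 0 1 ∧ nint (α * x + γ) ≤ δ}

lemma nintSublevel_subset_biUnion {α : ℝ} (hα : 0 < α) (γ δ : ℝ) :
    nintSublevel α γ δ ⊆
      ⋃ k ∈ Finset.Icc ⌈γ - δ⌉ ⌊α + γ + δ⌋, Icc ((k - δ - γ) / α) ((k + δ - γ) / α) := by
  rintro x ⟨⟨hx0, hx1⟩, hx⟩
  have hk := abs_le.1 hx
  have : α * x ≤ α := by nlinarith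
  refine mem_iUnion₂.2 ⟨round (α * x + γ), Finset.mem_Icc.2 ⟨?_, ?_⟩, ?_, ?_⟩
  · rw [Int.ceil_le]; nlinarith
  · rw [Int.le_floor]; nlinarith
  · rw [div_le_iff₀ hα]; linarith
  · rw [le_div_iff₀ hα]; linarith

lemma card_Icc_ceil_floor_le_s14 {α γ δ : ℝ} (hα : 1 ≤ α) (hδ : δ < 1 / 2) :
    ((Finset.Icc ⌈γ - δ⌉ ⌊α + γ + δ⌋).card : ℝ) ≤ 3 * α := by
  have hA : γ - δ ≤ ⌈γ - δ⌉ := Int.le_ceil _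
  have hB : (⌊α + γ + δ⌋ : ℝ) ≤ α + γ + δ := Int.floor_le _
  rw [Int.card_Icc, ← Int.cast_natCast, Int.toNat_eq_max, Int.cast_max]
  push_cast
  exact max_le (by linarith) (by linarith)

lemma volume_nintSublevel_le {α : ℝ} (hα : 1 ≤ α) (γ δ : ℝ) :
    volume (nintSublevel α γ δ) ≤ ENNReal.ofReal (6 * δ) := by
  have hα0 : 0 < α := by linarith
  rcases le_or_gt (1 / 2) δ with hδ | hδ
  · calc volume (nintSublevel α γ δ) ≤ volume (Icc (0 : ℝ) 1) := measure_mono fun x hx => hx.1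
      _ = ENNReal.ofReal 1 := by simp
      _ ≤ ENNReal.ofReal (6 * δ) := ENNReal.ofReal_le_ofReal (by linarith)
  calc volume (nintSublevel α γ δ)
      ≤ ∑ k ∈ Finset.Icc ⌈γ - δ⌉ ⌊α + γ + δ⌋,
          volume (Icc ((k - δ - γ) / α) ((k + δ - γ) / α)) :=
        (measure_mono (nintSublevel_subset_biUnion hα0 γ δ)).trans
          (measure_biUnion_finset_le _ _)
    _ = (Finset.Icc ⌈γ - δ⌉ ⌊α + γ + δ⌋).card * ENNReal.ofReal (2 * δ / α) := by
        rw [← nsmul_eq_mul, ← Finset.sum_const]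
        refine Finset.sum_congr rfl fun k _ => ?_
        rw [Real.volume_Icc]
        congr 1
        ring
    _ ≤ ENNReal.ofReal (3 * α) * ENNReal.ofReal (2 * δ / α) := by
        gcongr
        rw [← ENNReal.ofReal_natCast]
        exact ENNReal.ofReal_le_ofReal (card_Icc_ceil_floor_le_s14 hα hδ)
    _ = ENNReal.ofReal (6 * δ) := by
        rw [← ENNReal.ofReal_mul (by positivity)]
        congr 1
        field_simp
        ring




lemma natCeil_logb_two_add_one_le (x : ℝ) : (⌈Real.logb 2 x⌉₊ : ℝ) + 1 ≤ 4 * clog x := by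
  have hlog2 : 1 / 2 < Real.log 2 := by linarith [Real.log_two_gt_d9]
  rcases le_or_gt (Real.logb 2 x) 0 with hx | hx
  · rw [Nat.ceil_eq_zero.2 hx, Nat.cast_zero]
    linarith [one_le_clog x]
  · have hceil := Nat.ceil_lt_add_one hx.le
    have hlogb : Real.logb 2 x ≤ 2 * Real.log x := by
      have hlogx : 0 < Real.log x := by
        rw [Real.logb, div_pos_iff_of_pos_right (by linarith)] at hx; exact hx
      rw [Real.logb, div_le_iff₀ (by linarith)]
      nlinarith
    linarith [one_le_clog x, log_le_clog x]

lemma half_pow_natCeil_logb_le {p : ℝ} (hp : 0 < p) :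
    (1 / 2 : ℝ) ^ ⌈Real.logb 2 (1 / p)⌉₊ ≤ p := by
  have h : 1 / p ≤ (2 : ℝ) ^ ⌈Real.logb 2 (1 / p)⌉₊ := by
    calc 1 / p = (2 : ℝ) ^ Real.logb 2 (1 / p) :=
          (Real.rpow_logb (by norm_num) (by norm_num) (by positivity)).symm
      _ ≤ (2 : ℝ) ^ (⌈Real.logb 2 (1 / p)⌉₊ : ℝ) :=
          Real.rpow_le_rpow_of_exponent_le (by norm_num) (Nat.le_ceil _)
      _ = _ := Real.rpow_natCast _ _
  rw [div_pow, one_pow, div_le_iff₀ (by positivity)]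
  rw [div_le_iff₀ hp] at h
  linarith

lemma le_half_pow_or_exists_dyadic {u v p : ℝ} (J : ℕ) (hu : u ≤ 1) (hv : 0 ≤ v)
    (huv : u * v < p) :
    u ≤ (1 / 2) ^ (J + 1) ∨ ∃ j ≤ J, u ≤ (1 / 2) ^ j ∧ v ≤ p * 2 ^ (j + 1) := by
  rcases le_or_gt u ((1 / 2) ^ (J + 1)) with hJ | hJ
  · exact Or.inl hJ
  have hu0 : 0 < u := lt_trans (by positivity) hJ
  obtain ⟨j, hj, hj1⟩ := exists_nat_pow_near (one_le_one_div hu0 hu) one_lt_two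
  have hu2 : 1 / u < 2 ^ (J + 1) := by
    rwa [div_pow, one_pow, div_lt_iff₀ (by positivity), mul_comm, ← div_lt_iff₀ hu0] at hJ
  refine Or.inr ⟨j, ?_, ?_, ?_⟩
  · exact Nat.lt_succ_iff.1 ((pow_lt_pow_iff_right₀ one_lt_two).1 (hj.trans_lt hu2))
  · rwa [div_pow, one_pow, le_div_iff₀ (by positivity), mul_comm, ← le_div_iff₀ hu0]
  · have hp : 0 < p := lt_of_le_of_lt (mul_nonneg hu0.le hv) huv
    calc v ≤ p / u := by rw [le_div_iff₀ hu0, mul_comm]; exact huv.le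
      _ = p * (1 / u) := by ring
      _ ≤ p * 2 ^ (j + 1) := by gcongr

lemma volume_prod_nintSublevel_le {α β : ℝ} (hα : 1 ≤ α) (hβ : 1 ≤ β) (γ δ p : ℝ) (j : ℕ) :
    volume (nintSublevel α γ ((1 / 2) ^ j) ×ˢ nintSublevel β δ (p * 2 ^ (j + 1))) ≤
      ENNReal.ofReal (72 * p) := by
  rw [Measure.volume_eq_prod, Measure.prod_prod]
  calc volume (nintSublevel α γ ((1 / 2) ^ j)) * volume (nintSublevel β δ (p * 2 ^ (j + 1)))
      ≤ ENNReal.ofReal (6 * (1 / 2) ^ j) * ENNReal.ofReal (6 * (p * 2 ^ (j + 1))) :=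
        mul_le_mul' (volume_nintSublevel_le hα _ _) (volume_nintSublevel_le hβ _ _)
    _ = ENNReal.ofReal (72 * p) := by
        rw [← ENNReal.ofReal_mul (by positivity)]
        congr 1
        rw [pow_succ, div_pow, one_pow]
        field_simp
        ring

lemma volume_nintSublevel_prod_Icc_le {α : ℝ} (hα : 1 ≤ α) (γ δ : ℝ) :
    volume (nintSublevel α γ δ ×ˢ Icc (0 : ℝ) 1) ≤ ENNReal.ofReal (6 * δ) := by
  rw [Measure.volume_eq_prod, Measure.prod_prod, Real.volume_Icc, sub_zero, ENNReal.ofReal_one,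
    mul_one]
  exact volume_nintSublevel_le hα γ δ

lemma volume_nint_mul_nint_lt_le_s14 {α β : ℝ} (hα : 1 ≤ α) (hβ : 1 ≤ β) (γ δ p : ℝ) :
    volume {q : ℝ × ℝ | q.1 ∈ Icc (0 : ℝ) 1 ∧ q.2 ∈ Icc (0 : ℝ) 1 ∧
      nint (α * q.1 + γ) * nint (β * q.2 + δ) < p} ≤
      ENNReal.ofReal (300 * (p * clog (1 / p))) := by
  set S := {q : ℝ × ℝ | q.1 ∈ Icc (0 : ℝ) 1 ∧ q.2 ∈ Icc (0 : ℝ) 1 ∧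
      nint (α * q.1 + γ) * nint (β * q.2 + δ) < p}
  rcases le_or_gt p 0 with hp | hp
  · have : S = ∅ := eq_empty_of_forall_notMem fun q ⟨_, _, hq⟩ =>
      (mul_nonneg (nint_nonneg _) (nint_nonneg _)).not_gt (hq.trans_le hp)
    rw [this, measure_empty]
    exact zero_le
  set J := ⌈Real.logb 2 (1 / p)⌉₊
  have hcover : S ⊆ (⋃ j ∈ Finset.range (J + 1),
      nintSublevel α γ ((1 / 2) ^ j) ×ˢ nintSublevel β δ (p * 2 ^ (j + 1))) ∪
      nintSublevel α γ ((1 / 2) ^ (J + 1)) ×ˢ Icc 0 1 := by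
    rintro ⟨x, y⟩ ⟨hx, hy, hxy⟩
    rcases le_half_pow_or_exists_dyadic J ((nint_le_half _).trans (by norm_num))
      (nint_nonneg _) hxy with hxJ | ⟨j, hjJ, hxj, hyj⟩
    · exact Or.inr ⟨⟨hx, hxJ⟩, hy⟩
    · exact Or.inl (mem_iUnion₂.2 ⟨j, Finset.mem_range.2 (Nat.lt_succ_of_le hjJ),
        ⟨hx, hxj⟩, ⟨hy, hyj⟩⟩)
  have htail : 6 * (1 / 2 : ℝ) ^ (J + 1) ≤ 3 * p := by
    rw [pow_succ]; linarith [half_pow_natCeil_logb_le hp]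
  have hJ : (J : ℝ) + 1 ≤ 4 * clog (1 / p) := natCeil_logb_two_add_one_le _
  calc volume S
      ≤ ∑ j ∈ Finset.range (J + 1),
          volume (nintSublevel α γ ((1 / 2) ^ j) ×ˢ nintSublevel β δ (p * 2 ^ (j + 1))) +
        volume (nintSublevel α γ ((1 / 2) ^ (J + 1)) ×ˢ Icc (0 : ℝ) 1) :=
        (measure_mono hcover).trans
          ((measure_union_le _ _).trans (add_le_add_left (measure_biUnion_finset_le _ _) _))
    _ ≤ ∑ _j ∈ Finset.range (J + 1), ENNReal.ofReal (72 * p) + ENNReal.ofReal (3 * p) := by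
        gcongr with j
        · exact volume_prod_nintSublevel_le hα hβ γ δ p j
        · exact (volume_nintSublevel_prod_Icc_le hα γ _).trans (ENNReal.ofReal_le_ofReal htail)
    _ = ENNReal.ofReal ((J + 1) * (72 * p) + 3 * p) := by
        rw [Finset.sum_const, Finset.card_range, nsmul_eq_mul, ← ENNReal.ofReal_natCast,
          ← ENNReal.ofReal_mul (by positivity), ← ENNReal.ofReal_add (by positivity)
          (by positivity)]
        push_cast
        rfl
    _ ≤ ENNReal.ofReal (300 * (p * clog (1 / p))) := by
        apply ENNReal.ofReal_le_ofReal
        nlinarith [one_le_clog (1 / p)]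

theorem stmt14_general (a b c d : ℕ → ℝ) (ψ : ℕ → ℝ)
    (ha : ∀ n, 1 ≤ a n) (hab : ∀ n, a n ≤ b n)
    (hsum : Summable (fun n => ψ n * clog (1 / ψ n))) :
    volume {p : ℝ × ℝ | p.1 ∈ Icc (0:ℝ) 1 ∧ p.2 ∈ Icc (0:ℝ) 1 ∧
      {n : ℕ | nint (a n * p.1 + c n) * nint (b n * p.2 + d n) < ψ n}.Infinite} = 0 := by
  set s : ℕ → Set (ℝ × ℝ) := fun n => {p | p.1 ∈ Icc (0:ℝ) 1 ∧ p.2 ∈ Icc (0:ℝ) 1 ∧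
    nint (a n * p.1 + c n) * nint (b n * p.2 + d n) < ψ n}
  have hs : ∑' n, volume (s n) ≠ ⊤ :=
    ne_top_of_le_ne_top (hsum.mul_left 300).tsum_ofReal_ne_top <| ENNReal.tsum_le_tsum fun n =>
      volume_nint_mul_nint_lt_le_s14 (ha n) ((ha n).trans (hab n)) (c n) (d n) (ψ n)
  refine measure_mono_null (fun p ⟨hp1, hp2, hinf⟩ => ?_) (measure_limsup_atTop_eq_zero hs)
  rw [Filter.mem_limsup_iff_frequently_mem, Nat.frequently_atTop_iff_infinite]
  exact hinf.mono fun n hn => ⟨hp1, hp2, hn⟩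

theorem stmt14 (a b c d : ℕ → ℝ) (ψ : ℕ → ℝ)
    (ha : ∀ n, 1 ≤ a n) (hab : ∀ n, a n ≤ b n) (hψ : ∀ n, 0 ≤ ψ n)
    (hsum : Summable (fun n => ψ n * clog (1 / ψ n))) :
    volume {p : ℝ × ℝ | p.1 ∈ Icc (0:ℝ) 1 ∧ p.2 ∈ Icc (0:ℝ) 1 ∧
      {n : ℕ | nint (a n * p.1 + c n) * nint (b n * p.2 + d n) < ψ n}.Infinite} = 0 :=
  stmt14_general a b c d ψ ha hab hsum
end
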